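/- arXiv:2510.03597 — 6 statements merged into one kernel-verified Lean document; each statement's English description precedes it below -/
import Mathlib

section
/- Let p be a positive natural number, and let K be a real symmetric p×p matrix such that K − m•I and M•I − K are positive semidefinite, where 0 < m ≤ M. Let a, b ∈ ℝᵖ be nonzero vectors and let D be a real p×p matrix whose ℓ²→ℓ² operator norm satisfies ‖D‖_op ≤ η₁. Define cosθ := ⟨a, K·b⟩ / (√⟨a, K·a⟩ · √⟨b, K·b⟩). If ⟨a, K·b⟩ ≤ 0, then ⟨a, K·a⟩ + ⟨a, K·b⟩ + ⟨a, K·(D·a)⟩ ≤ M·(1 + η₁)·‖a‖² − m·‖a‖·‖b‖·(−cosθ). -/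
/-!
Bound the three terms separately. `K ⪯ M` gives `⟪a, K a⟫ ≤ M ‖a‖²`. Cauchy–Schwarz for the
positive semidefinite form `⟪·, K ·⟫` together with `K ⪯ M` gives
`⟪a, K D a⟫ ≤ M ‖a‖ ‖D a‖ ≤ M η₁ ‖a‖²`. Finally `⟪a, K b⟫ = cos θ · ‖a‖_K ‖b‖_K`, and since
`cos θ ≤ 0` and `m ⪯ K` gives `‖x‖_K ≥ √m ‖x‖`, this is at most `cos θ · m ‖a‖ ‖b‖`.
-/

open scoped RealInnerProductSpace

/-- The `ℓ² → ℓ²` operator norm of a real square matrix. -/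
noncomputable def l2OpNorm {p : ℕ} (A : Matrix (Fin p) (Fin p) ℝ) : ℝ :=
  ‖Matrix.toEuclideanCLM (𝕜 := ℝ) A‖

/-- Matrix-vector multiplication viewed as a map on Euclidean space. -/
def mv {p : ℕ} (A : Matrix (Fin p) (Fin p) ℝ) (x : EuclideanSpace ℝ (Fin p)) :
    EuclideanSpace ℝ (Fin p) := WithLp.toLp 2 (A.mulVec x)

open scoped ComplexOrder in
theorem Matrix.toEuclideanLin_le_toEuclideanLin_iff {𝕜 n : Type*} [RCLike 𝕜] [Fintype n]
    [DecidableEq n] {A B : Matrix n n 𝕜} :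
    A.toEuclideanLin ≤ B.toEuclideanLin ↔ (B - A).PosSemidef := by
  rw [LinearMap.le_def, ← map_sub, Matrix.isPositive_toEuclideanLin_iff]

theorem Matrix.toEuclideanLin_one {𝕜 n : Type*} [RCLike 𝕜] [Fintype n] [DecidableEq n] :
    (1 : Matrix n n 𝕜).toEuclideanLin = 1 :=
  Matrix.toLpLin_one 2

namespace LinearMap

variable {E : Type*} [NormedAddCommGroup E] [InnerProductSpace ℝ E] {T : E →ₗ[ℝ] E}

theorem mul_norm_sq_le_inner_map_self {m : ℝ} (h : m • 1 ≤ T) (x : E) :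
    m * ‖x‖ ^ 2 ≤ ⟪x, T x⟫ := by
  simpa [inner_sub_right, real_inner_smul_right, real_inner_self_eq_norm_sq] using
    ((le_def _ _).mp h).inner_nonneg_right x

theorem inner_map_self_le_mul_norm_sq {M : ℝ} (h : T ≤ M • 1) (x : E) :
    ⟪x, T x⟫ ≤ M * ‖x‖ ^ 2 := by
  simpa [inner_sub_right, real_inner_smul_right, real_inner_self_eq_norm_sq] using
    ((le_def _ _).mp h).inner_nonneg_right x

theorem IsPositive.inner_map_sq_le (hT : T.IsPositive) (x y : E) :
    ⟪x, T y⟫ ^ 2 ≤ ⟪x, T x⟫ * ⟪y, T y⟫ :=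
  BilinForm.apply_sq_le_of_symm ((innerₗ E).compl₂ T) hT.inner_nonneg_right
    ⟨fun x y => by simp [← hT.isSymmetric y x, real_inner_comm]⟩ x y

theorem IsPositive.inner_map_le_mul_norm_mul_norm (hT : T.IsPositive) {M : ℝ} (hM : 0 ≤ M)
    (h : T ≤ M • 1) (x y : E) : ⟪x, T y⟫ ≤ M * ‖x‖ * ‖y‖ := by
  refine le_of_abs_le (abs_le_of_sq_le_sq ?_ (by positivity))
  calc ⟪x, T y⟫ ^ 2 ≤ ⟪x, T x⟫ * ⟪y, T y⟫ := hT.inner_map_sq_le x y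
    _ ≤ (M * ‖x‖ ^ 2) * (M * ‖y‖ ^ 2) :=
      mul_le_mul (inner_map_self_le_mul_norm_sq h x) (inner_map_self_le_mul_norm_sq h y)
        (hT.inner_nonneg_right y) (by positivity)
    _ = (M * ‖x‖ * ‖y‖) ^ 2 := by ring

theorem mul_norm_mul_norm_le_sqrt_mul_sqrt {m : ℝ} (hm : 0 ≤ m) (h : m • 1 ≤ T) (x y : E) :
    m * ‖x‖ * ‖y‖ ≤ √⟪x, T x⟫ * √⟪y, T y⟫ := by
  have hsqrt (z : E) : √m * ‖z‖ ≤ √⟪z, T z⟫ := by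
    rw [← Real.sqrt_sq (norm_nonneg z), ← Real.sqrt_mul hm]
    exact Real.sqrt_le_sqrt (mul_norm_sq_le_inner_map_self h z)
  calc m * ‖x‖ * ‖y‖ = (√m * ‖x‖) * (√m * ‖y‖) := by
        rw [mul_mul_mul_comm, Real.mul_self_sqrt hm]; ring
    _ ≤ √⟪x, T x⟫ * √⟪y, T y⟫ :=
      mul_le_mul (hsqrt x) (hsqrt y) (by positivity) (Real.sqrt_nonneg _)

/-- The paper's `cos θ`, measured in the geometry of `⟪·, T ·⟫`; it is `0` when `x` or `y`
is `T`-null, since `r / 0 = 0`. -/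
noncomputable def angleCos (T : E →ₗ[ℝ] E) (x y : E) : ℝ :=
  ⟪x, T y⟫ / (√⟪x, T x⟫ * √⟪y, T y⟫)

theorem inner_map_le_mul_angleCos {m : ℝ} (hm : 0 ≤ m) (h : m • 1 ≤ T) {x y : E}
    (hobtuse : ⟪x, T y⟫ ≤ 0) : ⟪x, T y⟫ ≤ m * ‖x‖ * ‖y‖ * T.angleCos x y := by
  rcases (show 0 ≤ √⟪x, T x⟫ * √⟪y, T y⟫ by positivity).eq_or_lt with hd | hd
  · rwa [angleCos, ← hd, div_zero, mul_zero]
  have hcos : T.angleCos x y ≤ 0 := div_nonpos_of_nonpos_of_nonneg hobtuse hd.le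
  calc ⟪x, T y⟫ = T.angleCos x y * (√⟪x, T x⟫ * √⟪y, T y⟫) :=
        (div_mul_cancel₀ _ hd.ne').symm
    _ ≤ T.angleCos x y * (m * ‖x‖ * ‖y‖) :=
      mul_le_mul_of_nonpos_left (mul_norm_mul_norm_le_sqrt_mul_sqrt hm h x y) hcos
    _ = m * ‖x‖ * ‖y‖ * T.angleCos x y := mul_comm _ _

end LinearMap

theorem alignment_upper_bound_general
    {p : ℕ} (K : Matrix (Fin p) (Fin p) ℝ)
    (m M : ℝ) (hm : 0 < m) (hmM : m ≤ M)
    (hKlow : (K - m • (1 : Matrix (Fin p) (Fin p) ℝ)).PosSemidef)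
    (hKhigh : ((M • (1 : Matrix (Fin p) (Fin p) ℝ)) - K).PosSemidef)
    (a b : EuclideanSpace ℝ (Fin p))
    (D : Matrix (Fin p) (Fin p) ℝ) (η₁ : ℝ) (hD : l2OpNorm D ≤ η₁)
    (cosθ : ℝ)
    (hcos : cosθ = ⟪a, mv K b⟫ / (Real.sqrt ⟪a, mv K a⟫ * Real.sqrt ⟪b, mv K b⟫))
    (hobtuse : ⟪a, mv K b⟫ ≤ 0) :
    ⟪a, mv K a⟫ + ⟪a, mv K b⟫ + ⟪a, mv K (mv D a)⟫
      ≤ M * (1 + η₁) * ‖a‖ ^ 2 - m * ‖a‖ * ‖b‖ * (-cosθ) := by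
  -- `mv A x` is definitionally `A.toEuclideanLin x`, and `A.toEuclideanCLM x`.
  set T := K.toEuclideanLin
  have hM : 0 ≤ M := hm.le.trans hmM
  have hT_low : m • 1 ≤ T := by
    rwa [← Matrix.toEuclideanLin_one, ← map_smul, Matrix.toEuclideanLin_le_toEuclideanLin_iff]
  have hT_high : T ≤ M • 1 := by
    rwa [← Matrix.toEuclideanLin_one, ← map_smul, Matrix.toEuclideanLin_le_toEuclideanLin_iff]
  have hT : T.IsPositive :=
    T.nonneg_iff_isPositive.mp <|
      ((LinearMap.nonneg_iff_isPositive _).mpr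
        (LinearMap.isPositive_one.smul_of_nonneg hm.le)).trans hT_low
  have hDa : ‖mv D a‖ ≤ η₁ * ‖a‖ :=
    ((Matrix.toEuclideanCLM (𝕜 := ℝ) D).le_opNorm a).trans (by gcongr; exact hD)
  have h₁ : ⟪a, mv K a⟫ ≤ M * ‖a‖ ^ 2 := T.inner_map_self_le_mul_norm_sq hT_high a
  have h₂ : ⟪a, mv K b⟫ ≤ m * ‖a‖ * ‖b‖ * cosθ :=
    hcos ▸ T.inner_map_le_mul_angleCos hm.le hT_low hobtuse
  have h₃ : ⟪a, mv K (mv D a)⟫ ≤ M * ‖a‖ * (η₁ * ‖a‖) :=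
    (hT.inner_map_le_mul_norm_mul_norm hM hT_high a (mv D a)).trans
      (mul_le_mul_of_nonneg_left hDa (by positivity))
  linear_combination h₁ + h₂ + h₃

/-- **Directional upper bound for the alignment scalar (whitened core).**
`a` is the whitened model error, `b` the whitened sampler bias, `D` the whitened
curvature tilt with `‖D‖ ≤ η₁`, and `K = H_d^{1/2} P H_d^{1/2}` with `m I ⪯ K ⪯ M I`.
If the `K`-angle between `a` and `b` is obtuse (`⟪a, K b⟫ ≤ 0`), then the whitened
alignment scalar is bounded above by `M (1+η₁) ‖a‖² − m ‖a‖ ‖b‖ (−cos θ)`. -/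
theorem alignment_upper_bound
    {p : ℕ} (hp : 0 < p) (K : Matrix (Fin p) (Fin p) ℝ) (hKsymm : K.IsSymm)
    (m M : ℝ) (hm : 0 < m) (hmM : m ≤ M)
    (hKlow : (K - m • (1 : Matrix (Fin p) (Fin p) ℝ)).PosSemidef)
    (hKhigh : ((M • (1 : Matrix (Fin p) (Fin p) ℝ)) - K).PosSemidef)
    (a b : EuclideanSpace ℝ (Fin p)) (ha : a ≠ 0) (hb : b ≠ 0)
    (D : Matrix (Fin p) (Fin p) ℝ) (η₁ : ℝ) (hD : l2OpNorm D ≤ η₁)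
    (cosθ : ℝ)
    (hcos : cosθ = ⟪a, mv K b⟫ / (Real.sqrt ⟪a, mv K a⟫ * Real.sqrt ⟪b, mv K b⟫))
    (hobtuse : ⟪a, mv K b⟫ ≤ 0) :
    ⟪a, mv K a⟫ + ⟪a, mv K b⟫ + ⟪a, mv K (mv D a)⟫
      ≤ M * (1 + η₁) * ‖a‖ ^ 2 - m * ‖a‖ * ‖b‖ * (-cosθ) :=
  alignment_upper_bound_general K m M hm hmM hKlow hKhigh a b D η₁ hD cosθ hcos hobtuse
end

section
/- Let p be a positive natural number, and let K be a real symmetric p×p matrix such that K − m•I and M•I − K are positive semidefinite, where 0 < m ≤ M. Let a, b ∈ ℝᵖ be nonzero vectors and let D be a real p×p matrix with ‖D‖_op ≤ η₁. Define cosθ := ⟨a, K·b⟩ / (√⟨a, K·a⟩ · √⟨b, K·b⟩). If ⟨a, K·b⟩ < 0 and ‖a‖ < (m·‖b‖ / (M·(1 + η₁)))·(−cosθ), then ⟨a, K·a⟩ + ⟨a, K·b⟩ + ⟨a, K·(D·a)⟩ < 0. -/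
open scoped RealInnerProductSpace

/-!
Write `q x = ⟪x, K x⟫`, so that `m ‖x‖² ≤ q x ≤ M ‖x‖²`. Cauchy–Schwarz for the positive form
`⟪·, K ·⟫` bounds the perturbation term by `M ‖a‖ ‖D a‖ ≤ M η₁ ‖a‖²`, while the cross term is
`cos θ · √(q a) √(q b) ≤ cos θ · m ‖a‖ ‖b‖` because `cos θ < 0`. Hence the sum is at most
`‖a‖ (M (1 + η₁) ‖a‖ + cos θ · m ‖b‖)`, which is negative by the smallness assumption on `‖a‖`.
-/

namespace ContinuousLinearMap

variable {E : Type*} [NormedAddCommGroup E] [InnerProductSpace ℝ E] {T : E →L[ℝ] E}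

theorem IsPositive.real_inner_map_sq_le (hT : T.IsPositive) (x y : E) :
    ⟪x, T y⟫ ^ 2 ≤ ⟪x, T x⟫ * ⟪y, T y⟫ := by
  have hquad (t : ℝ) : 0 ≤ ⟪y, T y⟫ * (t * t) + 2 * ⟪x, T y⟫ * t + ⟪x, T x⟫ := by
    have hsymm : ⟪y, T x⟫ = ⟪x, T y⟫ := by
      rw [← hT.inner_left_eq_inner_right, real_inner_comm]
    have hnonneg := hT.inner_nonneg_right (x + t • y)
    simp only [map_add, map_smul, inner_add_left, inner_add_right, real_inner_smul_left,
      real_inner_smul_right, hsymm] at hnonneg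
    linarith
  have hdisc := discrim_le_zero hquad
  rw [discrim] at hdisc
  linarith

theorem mul_norm_sq_le_real_inner_map_self {m : ℝ} (h : m • 1 ≤ T) (x : E) :
    m * ‖x‖ ^ 2 ≤ ⟪x, T x⟫ := by
  have := h.inner_nonneg_right x
  simp only [sub_apply, smul_apply, one_apply_eq_self, inner_sub_right, real_inner_smul_right,
    real_inner_self_eq_norm_sq] at this
  linarith

theorem real_inner_map_self_le_mul_norm_sq {M : ℝ} (h : T ≤ M • 1) (x : E) :
    ⟪x, T x⟫ ≤ M * ‖x‖ ^ 2 := by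
  have := h.inner_nonneg_right x
  simp only [sub_apply, smul_apply, one_apply_eq_self, inner_sub_right, real_inner_smul_right,
    real_inner_self_eq_norm_sq] at this
  linarith

theorem isPositive_of_smul_one_le {m : ℝ} (hm : 0 ≤ m) (h : m • 1 ≤ T) : T.IsPositive :=
  (nonneg_iff_isPositive T).1 <|
    ((nonneg_iff_isPositive _).2 (isPositive_one.smul_of_nonneg hm)).trans h

theorem IsPositive.real_inner_map_le_mul_norm_mul_norm (hT : T.IsPositive) {M : ℝ}
    (hM : 0 ≤ M) (h : T ≤ M • 1) (x y : E) : ⟪x, T y⟫ ≤ M * ‖x‖ * ‖y‖ := by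
  refine le_of_abs_le (abs_le_of_sq_le_sq ?_ (by positivity))
  calc ⟪x, T y⟫ ^ 2 ≤ ⟪x, T x⟫ * ⟪y, T y⟫ := hT.real_inner_map_sq_le x y
    _ ≤ (M * ‖x‖ ^ 2) * (M * ‖y‖ ^ 2) :=
      mul_le_mul (real_inner_map_self_le_mul_norm_sq h x) (real_inner_map_self_le_mul_norm_sq h y)
        (hT.inner_nonneg_right y) (by positivity)
    _ = (M * ‖x‖ * ‖y‖) ^ 2 := by ring

theorem real_inner_map_le_div_mul_of_neg {m : ℝ} (hm : 0 ≤ m) (h : m • 1 ≤ T) {a b : E}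
    (hneg : ⟪a, T b⟫ < 0) :
    ⟪a, T b⟫ ≤ ⟪a, T b⟫ / (√⟪a, T a⟫ * √⟪b, T b⟫) * (m * ‖a‖ * ‖b‖) := by
  have hT := isPositive_of_smul_one_le hm h
  have hprod : 0 < √⟪a, T a⟫ * √⟪b, T b⟫ := by
    rw [← Real.sqrt_mul (hT.inner_nonneg_right a)]
    exact Real.sqrt_pos.2 ((sq_pos_of_neg hneg).trans_le (hT.real_inner_map_sq_le a b))
  have hlow : m * ‖a‖ * ‖b‖ ≤ √⟪a, T a⟫ * √⟪b, T b⟫ := by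
    rw [← Real.sqrt_mul (hT.inner_nonneg_right a)]
    refine Real.le_sqrt_of_sq_le ?_
    calc (m * ‖a‖ * ‖b‖) ^ 2 = (m * ‖a‖ ^ 2) * (m * ‖b‖ ^ 2) := by ring
      _ ≤ ⟪a, T a⟫ * ⟪b, T b⟫ :=
        mul_le_mul (mul_norm_sq_le_real_inner_map_self h a)
          (mul_norm_sq_le_real_inner_map_self h b) (by positivity) (hT.inner_nonneg_right a)
  calc ⟪a, T b⟫ = ⟪a, T b⟫ / (√⟪a, T a⟫ * √⟪b, T b⟫) * (√⟪a, T a⟫ * √⟪b, T b⟫) :=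
        (div_mul_cancel₀ _ hprod.ne').symm
    _ ≤ _ := mul_le_mul_of_nonpos_left hlow (div_nonpos_of_nonpos_of_nonneg hneg.le hprod.le)

end ContinuousLinearMap

open scoped ComplexOrder in
theorem Matrix.toEuclideanCLM_le_toEuclideanCLM_iff {𝕜 n : Type*} [RCLike 𝕜] [Fintype n]
    [DecidableEq n] {A B : Matrix n n 𝕜} :
    toEuclideanCLM (𝕜 := 𝕜) A ≤ toEuclideanCLM (𝕜 := 𝕜) B ↔ (B - A).PosSemidef := by
  rw [ContinuousLinearMap.le_def, ← map_sub, ← ContinuousLinearMap.isPositive_toLinearMap_iff,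
    coe_toEuclideanCLM_eq_toEuclideanLin, isPositive_toEuclideanLin_iff]

theorem norm_mv_le_l2OpNorm_mul {p : ℕ} (A : Matrix (Fin p) (Fin p) ℝ)
    (x : EuclideanSpace ℝ (Fin p)) : ‖mv A x‖ ≤ l2OpNorm A * ‖x‖ :=
  (Matrix.toEuclideanCLM (𝕜 := ℝ) A).le_opNorm x

theorem anti_alignment_sufficient_general
    {p : ℕ} (K : Matrix (Fin p) (Fin p) ℝ)
    (m M : ℝ) (hm : 0 < m) (hmM : m ≤ M)
    (hKlow : (K - m • (1 : Matrix (Fin p) (Fin p) ℝ)).PosSemidef)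
    (hKhigh : ((M • (1 : Matrix (Fin p) (Fin p) ℝ)) - K).PosSemidef)
    (a b : EuclideanSpace ℝ (Fin p)) (ha : a ≠ 0)
    (D : Matrix (Fin p) (Fin p) ℝ) (η₁ : ℝ) (hD : l2OpNorm D ≤ η₁)
    (cosθ : ℝ)
    (hcos : cosθ = ⟪a, mv K b⟫ / (Real.sqrt ⟪a, mv K a⟫ * Real.sqrt ⟪b, mv K b⟫))
    (hobtuse : ⟪a, mv K b⟫ < 0)
    (hsmall : ‖a‖ < (m * ‖b‖ / (M * (1 + η₁))) * (-cosθ)) :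
    ⟪a, mv K a⟫ + ⟪a, mv K b⟫ + ⟪a, mv K (mv D a)⟫ < 0 := by
  set T := Matrix.toEuclideanCLM (𝕜 := ℝ) K
  show ⟪a, T a⟫ + ⟪a, T b⟫ + ⟪a, T (mv D a)⟫ < 0
  have hTlow : m • 1 ≤ T := by
    simpa using Matrix.toEuclideanCLM_le_toEuclideanCLM_iff.2 hKlow
  have hThigh : T ≤ M • 1 := by
    simpa using Matrix.toEuclideanCLM_le_toEuclideanCLM_iff.2 hKhigh
  have hT := ContinuousLinearMap.isPositive_of_smul_one_le hm.le hTlow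
  have hM : 0 < M := hm.trans_le hmM
  have hη₁ : 0 ≤ η₁ := (norm_nonneg _).trans hD
  have hDa : ‖mv D a‖ ≤ η₁ * ‖a‖ :=
    (norm_mv_le_l2OpNorm_mul D a).trans (mul_le_mul_of_nonneg_right hD (norm_nonneg a))
  have hself : ⟪a, T a⟫ ≤ M * ‖a‖ ^ 2 :=
    ContinuousLinearMap.real_inner_map_self_le_mul_norm_sq hThigh a
  have hcross : ⟪a, T b⟫ ≤ cosθ * (m * ‖a‖ * ‖b‖) :=
    hcos ▸ ContinuousLinearMap.real_inner_map_le_div_mul_of_neg hm.le hTlow hobtuse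
  have hperturb : ⟪a, T (mv D a)⟫ ≤ M * ‖a‖ * (η₁ * ‖a‖) :=
    (hT.real_inner_map_le_mul_norm_mul_norm hM.le hThigh a (mv D a)).trans (by gcongr)
  have hsmall' : M * (1 + η₁) * ‖a‖ < m * ‖b‖ * -cosθ := by
    rwa [div_mul_eq_mul_div, lt_div_iff₀ (by positivity), mul_comm] at hsmall
  have ha' : 0 < ‖a‖ := norm_pos_iff.2 ha
  linarith [mul_lt_mul_of_pos_left hsmall' ha']

/-- **Sufficient condition for anti-alignment (boxed condition of Theorem 1).**
If the whitened sampler bias `b` makes an obtuse `K`-angle with the whitened model error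
`a`, and `‖a‖ < (m ‖b‖ / (M (1+η₁))) (−cos θ)`, then the whitened alignment scalar is
strictly negative, so negative extrapolation reduces the real-data risk. -/
theorem anti_alignment_sufficient
    {p : ℕ} (hp : 0 < p) (K : Matrix (Fin p) (Fin p) ℝ) (hKsymm : K.IsSymm)
    (m M : ℝ) (hm : 0 < m) (hmM : m ≤ M)
    (hKlow : (K - m • (1 : Matrix (Fin p) (Fin p) ℝ)).PosSemidef)
    (hKhigh : ((M • (1 : Matrix (Fin p) (Fin p) ℝ)) - K).PosSemidef)
    (a b : EuclideanSpace ℝ (Fin p)) (ha : a ≠ 0) (hb : b ≠ 0)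
    (D : Matrix (Fin p) (Fin p) ℝ) (η₁ : ℝ) (hD : l2OpNorm D ≤ η₁)
    (cosθ : ℝ)
    (hcos : cosθ = ⟪a, mv K b⟫ / (Real.sqrt ⟪a, mv K a⟫ * Real.sqrt ⟪b, mv K b⟫))
    (hobtuse : ⟪a, mv K b⟫ < 0)
    (hsmall : ‖a‖ < (m * ‖b‖ / (M * (1 + η₁))) * (-cosθ)) :
    ⟪a, mv K a⟫ + ⟪a, mv K b⟫ + ⟪a, mv K (mv D a)⟫ < 0 :=
  anti_alignment_sufficient_general K m M hm hmM hKlow hKhigh a b ha D η₁ hD cosθ hcos hobtuse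
    hsmall
end

section
/- Let p be a positive natural number, and let K be a real symmetric p×p matrix such that K − m•I and M•I − K are positive semidefinite, where 0 < m ≤ M. Let a, b ∈ ℝᵖ be nonzero vectors and let D be a real p×p matrix with ℓ²→ℓ² operator norm ‖D‖_op ≤ η₁. Define cosθ := ⟨a, K·b⟩ / (√⟨a, K·a⟩ · √⟨b, K·b⟩). Then ⟨a, K·a⟩ + ⟨a, K·b⟩ + ⟨a, K·(D·a)⟩ ≥ (m − M·η₁)·‖a‖² − M·‖a‖·‖b‖·max(−cosθ, 0). -/
open scoped RealInnerProductSpace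

/-!
The three terms are bounded separately. `⟪a, K a⟫ ≥ m ‖a‖²` is the lower Loewner bound. The
Cauchy–Schwarz inequality for the positive form `⟪·, K ·⟫`, together with `K ⪯ M I`, gives
`|⟪x, K y⟫| ≤ M ‖x‖ ‖y‖`, hence `⟪a, K D a⟫ ≥ -M η₁ ‖a‖²`. Finally `⟪a, K b⟫ = cos θ · d` with
`0 ≤ d = ‖a‖_K ‖b‖_K ≤ M ‖a‖ ‖b‖`, so `⟪a, K b⟫ ≥ -max(-cos θ, 0) · M ‖a‖ ‖b‖`.
-/

namespace LinearMap

variable {E : Type*} [NormedAddCommGroup E] [InnerProductSpace ℝ E] {T : E →ₗ[ℝ] E}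

/-- This is `0` when `x` or `y` is `T`-null, by the convention `r / 0 = 0`. -/
noncomputable def cosAngle (T : E →ₗ[ℝ] E) (x y : E) : ℝ :=
  ⟪x, T y⟫ / (√⟪x, T x⟫ * √⟪y, T y⟫)

namespace IsPositive

theorem real_inner_sq_le (hT : T.IsPositive) (x y : E) :
    ⟪x, T y⟫ ^ 2 ≤ ⟪x, T x⟫ * ⟪y, T y⟫ := by
  have hsymm : ⟪y, T x⟫ = ⟪x, T y⟫ := by rw [← hT.isSymmetric, real_inner_comm]
  have hquad : ∀ t : ℝ, 0 ≤ ⟪y, T y⟫ * (t * t) + 2 * ⟪x, T y⟫ * t + ⟪x, T x⟫ := fun t ↦ by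
    have h := hT.inner_nonneg_right (t • y + x)
    simp only [map_add, map_smul, inner_add_left, inner_add_right, real_inner_smul_left,
      real_inner_smul_right, hsymm] at h
    linarith
  have := discrim_le_zero hquad
  rw [discrim] at this
  linarith

theorem abs_real_inner_le_sqrt_mul_sqrt (hT : T.IsPositive) (x y : E) :
    |⟪x, T y⟫| ≤ √⟪x, T x⟫ * √⟪y, T y⟫ := by
  rw [← Real.sqrt_mul (hT.inner_nonneg_right x)]
  exact Real.abs_le_sqrt (hT.real_inner_sq_le x y)

theorem real_inner_eq_cosAngle_mul (hT : T.IsPositive) (x y : E) :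
    ⟪x, T y⟫ = cosAngle T x y * (√⟪x, T x⟫ * √⟪y, T y⟫) := by
  refine (div_mul_cancel_of_imp fun h ↦ ?_).symm
  simpa [h] using hT.abs_real_inner_le_sqrt_mul_sqrt x y

variable {M : ℝ}

theorem sqrt_mul_sqrt_le (hT : T.IsPositive) (hM : 0 ≤ M)
    (hTM : ∀ x, ⟪x, T x⟫ ≤ M * ‖x‖ ^ 2) (x y : E) :
    √⟪x, T x⟫ * √⟪y, T y⟫ ≤ M * ‖x‖ * ‖y‖ := by
  rw [← Real.sqrt_mul (hT.inner_nonneg_right x)]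
  refine Real.sqrt_le_iff.2 ⟨by positivity, ?_⟩
  calc ⟪x, T x⟫ * ⟪y, T y⟫ ≤ (M * ‖x‖ ^ 2) * (M * ‖y‖ ^ 2) :=
        mul_le_mul (hTM x) (hTM y) (hT.inner_nonneg_right y) (by positivity)
    _ = (M * ‖x‖ * ‖y‖) ^ 2 := by ring

theorem abs_real_inner_le (hT : T.IsPositive) (hM : 0 ≤ M)
    (hTM : ∀ x, ⟪x, T x⟫ ≤ M * ‖x‖ ^ 2) (x y : E) :
    |⟪x, T y⟫| ≤ M * ‖x‖ * ‖y‖ :=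
  (hT.abs_real_inner_le_sqrt_mul_sqrt x y).trans (hT.sqrt_mul_sqrt_le hM hTM x y)

theorem neg_mul_max_neg_cosAngle_le (hT : T.IsPositive) (hM : 0 ≤ M)
    (hTM : ∀ x, ⟪x, T x⟫ ≤ M * ‖x‖ ^ 2) (x y : E) :
    -(M * ‖x‖ * ‖y‖ * max (-cosAngle T x y) 0) ≤ ⟪x, T y⟫ := by
  set c := cosAngle T x y
  set d := √⟪x, T x⟫ * √⟪y, T y⟫
  have hd : 0 ≤ d := by positivity
  have hc : -max (-c) 0 ≤ c := neg_le.1 (le_max_left _ _)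
  calc -(M * ‖x‖ * ‖y‖ * max (-c) 0)
      ≤ -(d * max (-c) 0) := by
        gcongr
        exact hT.sqrt_mul_sqrt_le hM hTM x y
    _ = -max (-c) 0 * d := by ring
    _ ≤ c * d := mul_le_mul_of_nonneg_right hc hd
    _ = ⟪x, T y⟫ := (hT.real_inner_eq_cosAngle_mul x y).symm

end IsPositive

end LinearMap

namespace Matrix

variable {n : Type*} [DecidableEq n] {K : Matrix n n ℝ} {m : ℝ}

theorem mul_norm_sq_le_real_inner_toEuclideanLin [Fintype n] (hK : (K - m • 1).PosSemidef)
    (x : EuclideanSpace ℝ n) : m * ‖x‖ ^ 2 ≤ ⟪x, toEuclideanLin K x⟫ := by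
  have h := (isPositive_toEuclideanLin_iff.2 hK).inner_nonneg_right x
  simp only [map_sub, map_smul, toLpLin_one, LinearMap.sub_apply, LinearMap.smul_apply,
    LinearMap.id_apply, inner_sub_right, real_inner_smul_right, real_inner_self_eq_norm_sq] at h
  linarith

theorem real_inner_toEuclideanLin_le_mul_norm_sq [Fintype n] (hK : (m • 1 - K).PosSemidef)
    (x : EuclideanSpace ℝ n) : ⟪x, toEuclideanLin K x⟫ ≤ m * ‖x‖ ^ 2 := by
  have h := (isPositive_toEuclideanLin_iff.2 hK).inner_nonneg_right x
  simp only [map_sub, map_smul, toLpLin_one, LinearMap.sub_apply, LinearMap.smul_apply,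
    LinearMap.id_apply, inner_sub_right, real_inner_smul_right, real_inner_self_eq_norm_sq] at h
  linarith

theorem PosSemidef.of_sub_smul_one (hK : (K - m • 1).PosSemidef) (hm : 0 ≤ m) :
    K.PosSemidef := by
  simpa using hK.add (PosSemidef.one.smul hm)

end Matrix

theorem alignment_lower_bound_general
    {p : ℕ} (K : Matrix (Fin p) (Fin p) ℝ)
    (m M : ℝ) (hm : 0 < m) (hmM : m ≤ M)
    (hKlow : (K - m • (1 : Matrix (Fin p) (Fin p) ℝ)).PosSemidef)
    (hKhigh : ((M • (1 : Matrix (Fin p) (Fin p) ℝ)) - K).PosSemidef)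
    (a b : EuclideanSpace ℝ (Fin p))
    (D : Matrix (Fin p) (Fin p) ℝ) (η₁ : ℝ) (hD : l2OpNorm D ≤ η₁)
    (cosθ : ℝ)
    (hcos : cosθ = ⟪a, mv K b⟫ / (Real.sqrt ⟪a, mv K a⟫ * Real.sqrt ⟪b, mv K b⟫)) :
    (m - M * η₁) * ‖a‖ ^ 2 - M * ‖a‖ * ‖b‖ * max (-cosθ) 0
      ≤ ⟪a, mv K a⟫ + ⟪a, mv K b⟫ + ⟪a, mv K (mv D a)⟫ := by
  set T := Matrix.toEuclideanLin K
  change cosθ = LinearMap.cosAngle T a b at hcos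
  change _ ≤ ⟪a, T a⟫ + ⟪a, T b⟫ + ⟪a, T (mv D a)⟫
  have hM : 0 ≤ M := hm.le.trans hmM
  have hT : T.IsPositive :=
    Matrix.isPositive_toEuclideanLin_iff.2 (hKlow.of_sub_smul_one hm.le)
  have hTM := Matrix.real_inner_toEuclideanLin_le_mul_norm_sq hKhigh
  have hDa : ‖mv D a‖ ≤ η₁ * ‖a‖ :=
    ((Matrix.toEuclideanCLM (𝕜 := ℝ) D).le_opNorm a).trans
      (mul_le_mul_of_nonneg_right hD (norm_nonneg a))
  have hdiag := Matrix.mul_norm_sq_le_real_inner_toEuclideanLin hKlow a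
  have hcross := hT.neg_mul_max_neg_cosAngle_le hM hTM a b
  have htilt := neg_le_of_abs_le (hT.abs_real_inner_le hM hTM a (mv D a))
  have htilt_le : M * ‖a‖ * ‖mv D a‖ ≤ M * η₁ * ‖a‖ ^ 2 := by
    calc M * ‖a‖ * ‖mv D a‖ ≤ M * ‖a‖ * (η₁ * ‖a‖) := by gcongr
      _ = M * η₁ * ‖a‖ ^ 2 := by ring
  rw [hcos]
  linarith

/-- **Directional lower bound for the alignment scalar (whitened core).**
With `a` the whitened model error, `b` the whitened sampler bias, `D` the whitened
curvature tilt (`‖D‖ ≤ η₁`), and `m I ⪯ K ⪯ M I`, the whitened alignment scalar is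
bounded below by `(m − M η₁) ‖a‖² − M ‖a‖ ‖b‖ max(−cos θ, 0)`. -/
theorem alignment_lower_bound
    {p : ℕ} (hp : 0 < p) (K : Matrix (Fin p) (Fin p) ℝ) (hKsymm : K.IsSymm)
    (m M : ℝ) (hm : 0 < m) (hmM : m ≤ M)
    (hKlow : (K - m • (1 : Matrix (Fin p) (Fin p) ℝ)).PosSemidef)
    (hKhigh : ((M • (1 : Matrix (Fin p) (Fin p) ℝ)) - K).PosSemidef)
    (a b : EuclideanSpace ℝ (Fin p)) (ha : a ≠ 0) (hb : b ≠ 0)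
    (D : Matrix (Fin p) (Fin p) ℝ) (η₁ : ℝ) (hD : l2OpNorm D ≤ η₁)
    (cosθ : ℝ)
    (hcos : cosθ = ⟪a, mv K b⟫ / (Real.sqrt ⟪a, mv K a⟫ * Real.sqrt ⟪b, mv K b⟫)) :
    (m - M * η₁) * ‖a‖ ^ 2 - M * ‖a‖ * ‖b‖ * max (-cosθ) 0
      ≤ ⟪a, mv K a⟫ + ⟪a, mv K b⟫ + ⟪a, mv K (mv D a)⟫ :=
  alignment_lower_bound_general K m M hm hmM hKlow hKhigh a b D η₁ hD cosθ hcos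
end

section
/- Let p be a positive natural number, and let K be a real symmetric p×p matrix such that K − m•I and M•I − K are positive semidefinite, where 0 < m ≤ M. Let a, b ∈ ℝᵖ with a ≠ 0, and let D be a real p×p matrix with ℓ²→ℓ² operator norm ‖D‖_op ≤ η₁. If ⟨a, K·b⟩ ≥ 0 and M·η₁ < m, then ⟨a, K·a⟩ + ⟨a, K·b⟩ + ⟨a, K·(D·a)⟩ ≥ (m − M·η₁)·‖a‖² > 0. -/
/-!
The bias term is nonnegative by assumption and `K ⪰ m I` gives `⟪a, K a⟫ ≥ m ‖a‖²`. For the tilt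
term, `0 ⪯ K ⪯ M I` bounds every Rayleigh quotient of the self-adjoint operator `K` by `M` in
absolute value, hence `‖K‖ ≤ M`, and so `⟪a, K D a⟫ ≥ -‖K D‖ ‖a‖² ≥ -M η₁ ‖a‖²`.
-/

open scoped RealInnerProductSpace

namespace ContinuousLinearMap

theorem opNorm_le_of_abs_re_inner_self_le {𝕜 E : Type*} [RCLike 𝕜] [NormedAddCommGroup E]
    [InnerProductSpace 𝕜 E] {T : E →L[𝕜] E} (hT : T.IsSymmetric) {C : ℝ} (hC : 0 ≤ C)
    (h : ∀ x, |RCLike.re (inner 𝕜 (T x) x)| ≤ C * ‖x‖ ^ 2) : ‖T‖ ≤ C := by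
  rw [T.norm_eq_iSup_rayleighQuotient hT]
  refine ciSup_le fun x ↦ ?_
  rcases eq_or_ne x 0 with rfl | hx
  · simpa using hC
  · rw [rayleighQuotient, reApplyInnerSelf_apply, abs_div, abs_sq, div_le_iff₀ (by positivity)]
    exact h x

theorem neg_opNorm_mul_sq_le_inner_self {E : Type*} [NormedAddCommGroup E]
    [InnerProductSpace ℝ E] (S : E →L[ℝ] E) (x : E) : -(‖S‖ * ‖x‖ ^ 2) ≤ ⟪x, S x⟫ := by
  have habs : |⟪x, S x⟫| ≤ ‖S‖ * ‖x‖ ^ 2 := calc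
    |⟪x, S x⟫| ≤ ‖x‖ * ‖S x‖ := abs_real_inner_le_norm x (S x)
    _ ≤ ‖x‖ * (‖S‖ * ‖x‖) := by gcongr; exact S.le_opNorm x
    _ = ‖S‖ * ‖x‖ ^ 2 := by ring
  linarith [neg_abs_le ⟪x, S x⟫]

end ContinuousLinearMap

namespace Matrix

variable {n : Type*} [Fintype n] [DecidableEq n]

lemma inner_toEuclideanCLM_smul_one (c : ℝ) (x : EuclideanSpace ℝ n) :
    ⟪x, toEuclideanCLM (𝕜 := ℝ) (c • 1 : Matrix n n ℝ) x⟫ = c * ‖x‖ ^ 2 := by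
  simp [real_inner_smul_right]

lemma PosSemidef.inner_toEuclideanCLM_le {A B : Matrix n n ℝ} (h : (A - B).PosSemidef)
    (x : EuclideanSpace ℝ n) :
    ⟪x, toEuclideanCLM (𝕜 := ℝ) B x⟫ ≤ ⟪x, toEuclideanCLM (𝕜 := ℝ) A x⟫ := by
  simpa [inner_toEuclideanCLM, sub_mulVec, dotProduct_sub] using
    h.dotProduct_mulVec_nonneg x.ofLp

lemma PosSemidef.norm_toEuclideanCLM_le {K : Matrix n n ℝ} (hK : K.PosSemidef) {M : ℝ}
    (hM : 0 ≤ M) (hKM : (M • 1 - K).PosSemidef) : ‖toEuclideanCLM (𝕜 := ℝ) K‖ ≤ M := by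
  have hsymm : (toEuclideanCLM (𝕜 := ℝ) K).IsSymmetric := by
    rw [coe_toEuclideanCLM_eq_toEuclideanLin, isSymmetric_toEuclideanLin_iff]
    exact hK.isHermitian
  refine ContinuousLinearMap.opNorm_le_of_abs_re_inner_self_le hsymm hM fun x ↦ ?_
  have hlow : 0 ≤ ⟪x, toEuclideanCLM (𝕜 := ℝ) K x⟫ := by
    simpa [inner_toEuclideanCLM] using hK.dotProduct_mulVec_nonneg x.ofLp
  have hhigh := inner_toEuclideanCLM_smul_one M x ▸ hKM.inner_toEuclideanCLM_le x
  rw [RCLike.re_to_real, real_inner_comm, abs_le]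
  exact ⟨by linarith [mul_nonneg hM (sq_nonneg ‖x‖)], hhigh⟩

end Matrix

lemma mv_eq_toEuclideanCLM {p : ℕ} (A : Matrix (Fin p) (Fin p) ℝ)
    (x : EuclideanSpace ℝ (Fin p)) : mv A x = Matrix.toEuclideanCLM (𝕜 := ℝ) A x :=
  rfl

theorem self_training_helps_general
    {p : ℕ} (K : Matrix (Fin p) (Fin p) ℝ)
    (m M : ℝ) (hm : 0 < m) (hmM : m ≤ M)
    (hKlow : (K - m • (1 : Matrix (Fin p) (Fin p) ℝ)).PosSemidef)
    (hKhigh : ((M • (1 : Matrix (Fin p) (Fin p) ℝ)) - K).PosSemidef)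
    (a b : EuclideanSpace ℝ (Fin p)) (ha : a ≠ 0)
    (D : Matrix (Fin p) (Fin p) ℝ) (η₁ : ℝ) (hD : l2OpNorm D ≤ η₁)
    (hacute : 0 ≤ ⟪a, mv K b⟫) (htilt : M * η₁ < m) :
    (m - M * η₁) * ‖a‖ ^ 2 ≤ ⟪a, mv K a⟫ + ⟪a, mv K b⟫ + ⟪a, mv K (mv D a)⟫ ∧
      0 < (m - M * η₁) * ‖a‖ ^ 2 := by
  simp only [mv_eq_toEuclideanCLM] at hacute ⊢
  set T := Matrix.toEuclideanCLM (𝕜 := ℝ) K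
  set S := Matrix.toEuclideanCLM (𝕜 := ℝ) D
  have hM : 0 ≤ M := hm.le.trans hmM
  have hK : K.PosSemidef := by simpa using hKlow.add (Matrix.PosSemidef.one.smul hm.le)
  have hquad : m * ‖a‖ ^ 2 ≤ ⟪a, T a⟫ :=
    Matrix.inner_toEuclideanCLM_smul_one m a ▸ hKlow.inner_toEuclideanCLM_le a
  have hTS : ‖T.comp S‖ ≤ M * η₁ :=
    (T.opNorm_comp_le S).trans
      (mul_le_mul (hK.norm_toEuclideanCLM_le hM hKhigh) hD (norm_nonneg S) hM)
  have htiltTerm : -(M * η₁ * ‖a‖ ^ 2) ≤ ⟪a, T (S a)⟫ :=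
    (T.comp S).neg_opNorm_mul_sq_le_inner_self a |>.trans' (by gcongr)
  have hgap : 0 < (m - M * η₁) * ‖a‖ ^ 2 := by
    have hmargin : 0 < m - M * η₁ := sub_pos.2 htilt
    positivity
  exact ⟨by linarith, hgap⟩

/-- **Self-training helps near good models under diversity-seeking samplers.**
If the whitened sampler bias `b` makes a nonobtuse `K`-angle with the whitened model error
`a` (`⟪a, K b⟫ ≥ 0`) and the curvature tilt is small (`M η₁ < m`), then the whitened
alignment scalar is at least `(m − M η₁) ‖a‖² > 0`, i.e. strictly positive. -/
theorem self_training_helps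
    {p : ℕ} (hp : 0 < p) (K : Matrix (Fin p) (Fin p) ℝ) (hKsymm : K.IsSymm)
    (m M : ℝ) (hm : 0 < m) (hmM : m ≤ M)
    (hKlow : (K - m • (1 : Matrix (Fin p) (Fin p) ℝ)).PosSemidef)
    (hKhigh : ((M • (1 : Matrix (Fin p) (Fin p) ℝ)) - K).PosSemidef)
    (a b : EuclideanSpace ℝ (Fin p)) (ha : a ≠ 0)
    (D : Matrix (Fin p) (Fin p) ℝ) (η₁ : ℝ) (hD : l2OpNorm D ≤ η₁)
    (hacute : 0 ≤ ⟪a, mv K b⟫) (htilt : M * η₁ < m) :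
    (m - M * η₁) * ‖a‖ ^ 2 ≤ ⟪a, mv K a⟫ + ⟪a, mv K b⟫ + ⟪a, mv K (mv D a)⟫ ∧
      0 < (m - M * η₁) * ‖a‖ ^ 2 :=
  self_training_helps_general K m M hm hmM hKlow hKhigh a b ha D η₁ hD hacute htilt
end

section
/- Let E be a real normed space, g : E → E a function that is L-Lipschitz (L ≥ 0), A : E →L[ℝ] E a continuous linear map, α > 0 a real number, and T a positive natural number. Let θ : ℕ → E satisfy the recursion θ(k+1) = θ(k) − α • A(g(θ(k))) for all k. If α·T·L·‖A‖_op ≤ 1/2, then ‖θ(T) − θ(0) + (α·T) • A(g(θ(0)))‖ ≤ (α·T)²·L·‖A‖_op²·‖g(θ(0))‖. -/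
/-- **Short fine-tuning displacement (deterministic core).**
`θ k` are the parameters after `k` preconditioned gradient steps of size `α` on the fixed
synthetic objective with `L`-Lipschitz gradient map `g` and preconditioner `A`.  If the
total step budget satisfies `α T L ‖A‖ ≤ 1/2`, then the displacement `θ T − θ 0`
concentrates on `−(α T) • A (g (θ 0))` up to an error of order `(α T)² L ‖A‖² ‖g(θ 0)‖`. -/
theorem short_finetune_displacement
    {E : Type*} [NormedAddCommGroup E] [NormedSpace ℝ E]
    (g : E → E) (L : ℝ) (hL : 0 ≤ L)
    (hg : ∀ x y : E, ‖g x - g y‖ ≤ L * ‖x - y‖)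
    (A : E →L[ℝ] E) (α : ℝ) (hα : 0 < α) (T : ℕ) (hT : 0 < T)
    (θ : ℕ → E) (hrec : ∀ k : ℕ, θ (k + 1) = θ k - α • A (g (θ k)))
    (hbudget : α * T * L * ‖A‖ ≤ 1 / 2) :
    ‖θ T - θ 0 + (α * T) • A (g (θ 0))‖ ≤ (α * T) ^ 2 * L * ‖A‖ ^ 2 * ‖g (θ 0)‖ := by
  set G0 := ‖g (θ 0)‖ with hG0
  have hAnn : (0:ℝ) ≤ ‖A‖ := norm_nonneg _
  have hG0nn : (0:ℝ) ≤ G0 := norm_nonneg _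
  -- distance bound by induction
  have hd : ∀ k, k ≤ T → ‖θ k - θ 0‖ ≤ 2 * α * k * ‖A‖ * G0 := by
    intro k
    induction k with
    | zero => intro _; simp
    | succ n ih =>
      intro hk
      have hn : n ≤ T := Nat.le_of_succ_le hk
      have ihn := ih hn
      have hgk : ‖g (θ n)‖ ≤ G0 + L * ‖θ n - θ 0‖ := by
        have h1 : ‖g (θ n)‖ ≤ ‖g (θ 0)‖ + ‖g (θ n) - g (θ 0)‖ := by
          have := norm_add_le (g (θ 0)) (g (θ n) - g (θ 0))
          simpa using this
        have h2 := hg (θ n) (θ 0)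
        linarith
      have hstep : ‖θ (n+1) - θ 0‖ ≤ ‖θ n - θ 0‖ + α * (‖A‖ * ‖g (θ n)‖) := by
        have : θ (n+1) - θ 0 = (θ n - θ 0) - α • A (g (θ n)) := by
          rw [hrec n]; abel
        rw [this]
        calc ‖(θ n - θ 0) - α • A (g (θ n))‖
            ≤ ‖θ n - θ 0‖ + ‖α • A (g (θ n))‖ := norm_sub_le _ _
          _ ≤ ‖θ n - θ 0‖ + α * (‖A‖ * ‖g (θ n)‖) := by
              rw [norm_smul, Real.norm_eq_abs, abs_of_pos hα]
              gcongr
              exact A.le_opNorm _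
      -- budget at step n
      have hnle : (n:ℝ) ≤ (T:ℝ) := by exact_mod_cast hn
      have hbn : α * n * L * ‖A‖ ≤ 1 / 2 := by
        have h := mul_le_mul_of_nonneg_right
          (mul_le_mul_of_nonneg_left hnle hα.le) (mul_nonneg hL hAnn)
        calc α * n * L * ‖A‖ = α * n * (L * ‖A‖) := by ring
          _ ≤ α * T * (L * ‖A‖) := h
          _ = α * T * L * ‖A‖ := by ring
          _ ≤ 1 / 2 := hbudget
      have key : α * ‖A‖ * L * ‖θ n - θ 0‖ ≤ α * ‖A‖ * G0 := by
        have h1 : α * ‖A‖ * L * ‖θ n - θ 0‖ ≤ α * ‖A‖ * L * (2 * α * n * ‖A‖ * G0) := by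
          have hnng : 0 ≤ α * ‖A‖ * L := by positivity
          nlinarith
        have h2 : α * ‖A‖ * L * (2 * α * n * ‖A‖ * G0) ≤ α * ‖A‖ * G0 := by
          nlinarith [mul_nonneg (mul_nonneg hα.le hAnn) hG0nn]
        linarith
      have hmul : α * ‖A‖ * ‖g (θ n)‖ ≤ α * ‖A‖ * (G0 + L * ‖θ n - θ 0‖) :=
        mul_le_mul_of_nonneg_left hgk (mul_nonneg hα.le hAnn)
      push_cast
      nlinarith [hmul, mul_nonneg (mul_nonneg hα.le hAnn) hG0nn]
  -- sum representation
  have hconst : (α * (T:ℝ)) • A (g (θ 0)) = ∑ _k ∈ Finset.range T, α • A (g (θ 0)) := by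
    rw [Finset.sum_const, Finset.card_range, ← Nat.cast_smul_eq_nsmul ℝ, smul_smul, mul_comm]
  have hsum : θ T - θ 0 + (α * (T:ℝ)) • A (g (θ 0))
      = ∑ k ∈ Finset.range T, α • (A (g (θ 0)) - A (g (θ k))) := by
    have h1 : θ T - θ 0 = ∑ k ∈ Finset.range T, (θ (k+1) - θ k) :=
      (Finset.sum_range_sub θ T).symm
    have h2 : ∀ k ∈ Finset.range T, θ (k+1) - θ k = -(α • A (g (θ k))) := by
      intro k _; rw [hrec k]; abel
    rw [h1, Finset.sum_congr rfl h2, hconst, ← Finset.sum_add_distrib]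
    refine Finset.sum_congr rfl fun k _ => ?_
    rw [smul_sub]; abel
  rw [hsum]
  -- termwise bound
  have hterm : ∀ k ∈ Finset.range T,
      ‖α • (A (g (θ 0)) - A (g (θ k)))‖ ≤ (2 * α ^ 2 * L * ‖A‖ ^ 2 * G0) * k := by
    intro k hk
    have hkT : k ≤ T := le_of_lt (Finset.mem_range.mp hk)
    have hdk := hd k hkT
    have h1 : ‖A (g (θ 0)) - A (g (θ k))‖ ≤ ‖A‖ * ‖g (θ 0) - g (θ k)‖ := by
      rw [← map_sub]; exact A.le_opNorm _
    have h2 : ‖g (θ 0) - g (θ k)‖ ≤ L * ‖θ 0 - θ k‖ := hg _ _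
    have h3 : ‖θ 0 - θ k‖ = ‖θ k - θ 0‖ := norm_sub_rev _ _
    rw [norm_smul, Real.norm_eq_abs, abs_of_pos hα]
    have hch : ‖A (g (θ 0)) - A (g (θ k))‖ ≤ ‖A‖ * (L * (2 * α * k * ‖A‖ * G0)) := by
      calc ‖A (g (θ 0)) - A (g (θ k))‖ ≤ ‖A‖ * ‖g (θ 0) - g (θ k)‖ := h1
        _ ≤ ‖A‖ * (L * ‖θ k - θ 0‖) := by rw [← h3]; gcongr
        _ ≤ ‖A‖ * (L * (2 * α * k * ‖A‖ * G0)) := by gcongr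
    calc α * ‖A (g (θ 0)) - A (g (θ k))‖
        ≤ α * (‖A‖ * (L * (2 * α * k * ‖A‖ * G0))) := by gcongr
      _ = (2 * α ^ 2 * L * ‖A‖ ^ 2 * G0) * k := by ring
  have hnormsum := norm_sum_le (Finset.range T) (fun k => α • (A (g (θ 0)) - A (g (θ k))))
  have hsum2 : ∑ k ∈ Finset.range T, ‖α • (A (g (θ 0)) - A (g (θ k)))‖
      ≤ ∑ k ∈ Finset.range T, (2 * α ^ 2 * L * ‖A‖ ^ 2 * G0) * (k:ℝ) :=
    Finset.sum_le_sum hterm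
  have hgaussN : (∑ k ∈ Finset.range T, k) * 2 ≤ T * T := by
    rw [Finset.sum_range_id_mul_two]
    exact Nat.mul_le_mul_left _ (Nat.sub_le _ _)
  have hgauss : (∑ k ∈ Finset.range T, (k:ℝ)) * 2 ≤ (T:ℝ) * T := by
    rw [← Nat.cast_sum]
    exact_mod_cast hgaussN
  have hcoef : (0:ℝ) ≤ 2 * α ^ 2 * L * ‖A‖ ^ 2 * G0 := by positivity
  have hfin : ∑ k ∈ Finset.range T, (2 * α ^ 2 * L * ‖A‖ ^ 2 * G0) * (k:ℝ)
      ≤ (α * T) ^ 2 * L * ‖A‖ ^ 2 * G0 := by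
    rw [← Finset.mul_sum]
    nlinarith [mul_le_mul_of_nonneg_left hgauss
      (by positivity : (0:ℝ) ≤ α ^ 2 * L * ‖A‖ ^ 2 * G0)]
  linarith
end

section
/- Let (X, 𝒜, μ) be a probability space, E a finite-dimensional real inner product space, u : X → E a Bochner integrable function with ∫ u dμ = 0, ε ∈ E, and f : ℝ → ℝ a monotone nondecreasing, nonnegative function such that x ↦ f(⟨ε, u(x)⟩) is μ-integrable and x ↦ f(⟨ε, u(x)⟩) • u(x) is Bochner integrable. Then ⟨ε, ∫ f(⟨ε, u(x)⟩) • u(x) dμ(x)⟩ ≥ 0. -/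
open MeasureTheory
open scoped RealInnerProductSpace

/-- **Mode-seeking reweightings produce a nonnegatively aligned mean score (vector form).**
The score `u` has mean zero under the reference distribution `μ`; a mode-seeking sampler
reweights `μ` by the nondecreasing nonnegative weight `f` applied to the first-order
log-likelihood perturbation `B x = ⟪ε, u x⟫`.  Then the reweighted mean score
`∫ f(⟪ε, u x⟫) • u x dμ` has nonnegative inner product with the model error `ε`. -/
theorem reweighted_score_nonneg_alignment
    {X : Type*} [MeasurableSpace X] (μ : Measure X) [IsProbabilityMeasure μ]
    {E : Type*} [NormedAddCommGroup E] [InnerProductSpace ℝ E] [FiniteDimensional ℝ E]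
    (u : X → E) (hu : Integrable u μ) (humean : ∫ x, u x ∂μ = 0)
    (ε : E) (f : ℝ → ℝ) (hf : Monotone f) (hfpos : ∀ t, 0 ≤ f t)
    (hfB : Integrable (fun x => f ⟪ε, u x⟫) μ)
    (hfBu : Integrable (fun x => f ⟪ε, u x⟫ • u x) μ) :
    0 ≤ ⟪ε, ∫ x, f ⟪ε, u x⟫ • u x ∂μ⟫ := by
  have h1 : ⟪ε, ∫ x, f ⟪ε, u x⟫ • u x ∂μ⟫ = ∫ x, f ⟪ε, u x⟫ * ⟪ε, u x⟫ ∂μ := by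
    rw [← integral_inner hfBu ε]
    simp [real_inner_smul_right]
  have hB : Integrable (fun x => ⟪ε, u x⟫) μ := hu.const_inner (𝕜 := ℝ) ε
  have hBmean : ∫ x, ⟪ε, u x⟫ ∂μ = 0 := by
    rw [integral_inner hu ε, humean, inner_zero_right]
  have hint : Integrable (fun x => f ⟪ε, u x⟫ * ⟪ε, u x⟫) μ := by
    have := hfBu.const_inner (𝕜 := ℝ) ε
    simpa [real_inner_smul_right, mul_comm] using this
  have hmono : ∀ x, f 0 * ⟪ε, u x⟫ ≤ f ⟪ε, u x⟫ * ⟪ε, u x⟫ := by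
    intro x
    rcases le_or_gt 0 ⟪ε, u x⟫ with h | h
    · exact mul_le_mul_of_nonneg_right (hf h) h
    · exact mul_le_mul_of_nonpos_right (hf h.le) h.le
  rw [h1]
  calc (0:ℝ) = ∫ x, f 0 * ⟪ε, u x⟫ ∂μ := by
        rw [integral_const_mul, hBmean, mul_zero]
    _ ≤ ∫ x, f ⟪ε, u x⟫ * ⟪ε, u x⟫ ∂μ :=
        integral_mono (hB.const_mul _) hint hmono
end
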